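/- arXiv:2010.11839 — 2 statements merged into one kernel-verified Lean document; each statement's English description precedes it below -/
import Mathlib

section
/- Fix a job assignment Ŷ (a function specifying, for each machine, the set of jobs it processes), and let Φ(Ŷ) be the set of all schedules whose machine job sets agree with Ŷ. If π† ∈ Φ(Ŷ) minimizes the total setup time Σ_{i∈M} T_i(π) over all π ∈ Φ(Ŷ), then π† also minimizes the maximum regret over Φ(Ŷ): R_max(π†) ≤ R_max(π̂) for every π̂ ∈ Φ(Ŷ). -/
open Finset

noncomputable section

/-- Total setup time of machine `i` processing the job list `l`:
the initial setup for the first job plus the setup times over consecutive pairs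
(`0` if the list is empty). -/
def totalSetup {M N : Type*} (setup0 : M → N → ℝ) (setup : M → N → N → ℝ)
    (i : M) (l : List N) : ℝ :=
  match l with
  | [] => 0
  | k :: rest => setup0 i k + (List.zipWith (setup i) (k :: rest) rest).sum

/-- A schedule assigns to each machine a finite sequence of jobs without repetition,
such that every job appears in exactly one machine's sequence. -/
structure Schedule (M N : Type*) where
  seq : M → List N
  nodup : ∀ i, (seq i).Nodup
  cover : ∀ j : N, ∃! i : M, j ∈ seq i

variable {M N : Type*}

/-- Completion time of machine `i` in schedule `sc` under scenario `p`. -/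
def complTime (setup0 : M → N → ℝ) (setup : M → N → N → ℝ)
    (sc : Schedule M N) (p : M → N → ℝ) (i : M) : ℝ :=
  totalSetup setup0 setup i (sc.seq i) + ((sc.seq i).map (p i)).sum

/-- Makespan of schedule `sc` under scenario `p`: max machine completion time. -/
def makespan [Fintype M] [Nonempty M] (setup0 : M → N → ℝ) (setup : M → N → N → ℝ)
    (sc : Schedule M N) (p : M → N → ℝ) : ℝ :=
  Finset.univ.sup' Finset.univ_nonempty (complTime setup0 setup sc p)

/-- Optimal makespan under scenario `p`: minimum over all schedules. -/
def optMakespan [Fintype M] [Nonempty M] (setup0 : M → N → ℝ) (setup : M → N → N → ℝ)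
    (p : M → N → ℝ) : ℝ :=
  ⨅ sc : Schedule M N, makespan setup0 setup sc p

/-- The scenario set `S`: all processing-time matrices between the bounds. -/
def ScenSet (lb ub : M → N → ℝ) : Set (M → N → ℝ) :=
  {p | ∀ i j, lb i j ≤ p i j ∧ p i j ≤ ub i j}

/-- Regret of schedule `sc` under scenario `p`. -/
def regret [Fintype M] [Nonempty M] (setup0 : M → N → ℝ) (setup : M → N → N → ℝ)
    (sc : Schedule M N) (p : M → N → ℝ) : ℝ :=
  makespan setup0 setup sc p - optMakespan setup0 setup p

/-- Maximum regret of schedule `sc` over the scenario set. -/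
def maxRegret [Fintype M] [Nonempty M] (setup0 : M → N → ℝ) (setup : M → N → N → ℝ)
    (lb ub : M → N → ℝ) (sc : Schedule M N) : ℝ :=
  ⨆ p : ScenSet lb ub, regret setup0 setup sc p.1

/-- The extreme scenario of schedule `sc` for machine `f`: upper bounds on jobs
assigned to machine `f`, lower bounds elsewhere. -/
def extremeScen [DecidableEq N] (lb ub : M → N → ℝ) (sc : Schedule M N) (f : M) :
    M → N → ℝ :=
  fun i j => if j ∈ sc.seq f then ub i j else lb i j

/-!
Replacing the sequence of one machine by another ordering of the same jobs keeps the job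
assignment, so a sequencing that minimizes the total setup time within `Φ(Ŷ)` minimizes the
setup time of every machine separately. Processing-time sums depend only on the job sets, hence
`π†` has no larger completion time on any machine, and no larger makespan and regret, in every
scenario. Because there are only finitely many schedules, regrets are bounded over the scenario
set, so the inequality passes to the suprema.
-/

theorem Fintype.le_of_sum_le_sum_update {ι α : Type*} [Fintype ι] [DecidableEq ι]
    [AddCommMonoid α] [PartialOrder α] [IsOrderedCancelAddMonoid α]
    (g : ι → α) (i : ι) (x : α) (h : ∑ k, g k ≤ ∑ k, Function.update g i x k) : g i ≤ x := by
  rw [Finset.sum_update_of_mem (mem_univ i),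
    Finset.sum_eq_add_sum_sdiff_singleton_of_mem (mem_univ i)] at h
  exact le_of_add_le_add_right h

namespace Schedule

theorem seq_injective : Function.Injective (seq : Schedule M N → M → List N) := by
  rintro ⟨_, _, _⟩ ⟨_, _, _⟩ rfl
  rfl

theorem finite_jobs [Finite M] (sc : Schedule M N) : Finite N := by
  have hcover : ⋃ i, {j | j ∈ sc.seq i} = Set.univ :=
    Set.eq_univ_of_forall fun j => Set.mem_iUnion.2 (sc.cover j).exists
  exact Set.finite_univ_iff.1 (hcover ▸ Set.finite_iUnion fun i => (sc.seq i).finite_toSet)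

instance [Finite M] [Finite N] : Finite (Schedule M N) := by
  have := Fintype.ofFinite N
  exact Finite.of_injective (fun sc i => (⟨sc.seq i, sc.nodup i⟩ : {l : List N // l.Nodup}))
    fun sc sc' h => seq_injective (funext fun i => congrArg Subtype.val (congrFun h i))

def reorder [DecidableEq M] (sc : Schedule M N) (i : M) (l : List N) (hl : l.Perm (sc.seq i)) :
    Schedule M N where
  seq := Function.update sc.seq i l
  nodup k := by
    rcases eq_or_ne k i with rfl | hk
    · simpa using hl.nodup_iff.2 (sc.nodup k)
    · simpa [hk] using sc.nodup k
  cover j := by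
    have hmem : ∀ k, j ∈ Function.update sc.seq i l k ↔ j ∈ sc.seq k := by
      intro k
      rcases eq_or_ne k i with rfl | hk
      · simpa using hl.mem_iff
      · simp [hk]
    simpa only [hmem] using sc.cover j

theorem toFinset_reorder_seq [DecidableEq M] [DecidableEq N] (sc : Schedule M N) (i : M)
    (l : List N) (hl : l.Perm (sc.seq i)) (k : M) :
    ((sc.reorder i l hl).seq k).toFinset = (sc.seq k).toFinset := by
  rcases eq_or_ne k i with rfl | hk
  · simpa [reorder] using List.toFinset_eq_of_perm _ _ hl
  · simp [reorder, hk]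

theorem seq_perm_of_toFinset_eq [DecidableEq N] (sc sc' : Schedule M N) (i : M)
    (h : (sc.seq i).toFinset = (sc'.seq i).toFinset) : (sc.seq i).Perm (sc'.seq i) :=
  List.perm_of_nodup_nodup_toFinset_eq (sc.nodup i) (sc'.nodup i) h

end Schedule

section Regret

variable (setup0 : M → N → ℝ) (setup : M → N → N → ℝ)

theorem totalSetup_le_of_sum_le_reorder [Fintype M] [DecidableEq M] (sc : Schedule M N) (i : M)
    (l : List N) (hl : l.Perm (sc.seq i))
    (h : ∑ k, totalSetup setup0 setup k (sc.seq k) ≤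
      ∑ k, totalSetup setup0 setup k ((sc.reorder i l hl).seq k)) :
    totalSetup setup0 setup i (sc.seq i) ≤ totalSetup setup0 setup i l := by
  refine Fintype.le_of_sum_le_sum_update (fun k => totalSetup setup0 setup k (sc.seq k)) i _ ?_
  simpa only [Schedule.reorder, Function.apply_update (totalSetup setup0 setup)] using h

theorem complTime_le_of_perm (sc sc' : Schedule M N) (p : M → N → ℝ) (i : M)
    (hperm : (sc.seq i).Perm (sc'.seq i))
    (hsetup : totalSetup setup0 setup i (sc.seq i) ≤ totalSetup setup0 setup i (sc'.seq i)) :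
    complTime setup0 setup sc p i ≤ complTime setup0 setup sc' p i :=
  add_le_add hsetup ((hperm.map (p i)).sum_eq).le

theorem complTime_mono_scenario (sc : Schedule M N) {p q : M → N → ℝ} (hpq : p ≤ q) (i : M) :
    complTime setup0 setup sc p i ≤ complTime setup0 setup sc q i :=
  add_le_add_right (List.sum_le_sum fun j _ => hpq i j) _

variable [Fintype M] [Nonempty M]

theorem makespan_le_of_complTime_le {sc sc' : Schedule M N} {p q : M → N → ℝ}
    (h : ∀ i, complTime setup0 setup sc p i ≤ complTime setup0 setup sc' q i) :
    makespan setup0 setup sc p ≤ makespan setup0 setup sc' q :=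
  Finset.sup'_mono_fun fun i _ => h i

theorem makespan_mono_scenario (sc : Schedule M N) {p q : M → N → ℝ} (hpq : p ≤ q) :
    makespan setup0 setup sc p ≤ makespan setup0 setup sc q :=
  makespan_le_of_complTime_le setup0 setup (complTime_mono_scenario setup0 setup sc hpq)

theorem optMakespan_mono [Finite N] {p q : M → N → ℝ} (hpq : p ≤ q) :
    optMakespan setup0 setup p ≤ optMakespan setup0 setup q :=
  ciInf_mono (Set.finite_range _).bddBelow fun sc => makespan_mono_scenario setup0 setup sc hpq

theorem bddAbove_regret [Finite N] (lb ub : M → N → ℝ) (sc : Schedule M N) :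
    BddAbove (Set.range fun p : ScenSet lb ub => regret setup0 setup sc p.1) := by
  refine ⟨makespan setup0 setup sc ub - optMakespan setup0 setup lb, ?_⟩
  rintro _ ⟨⟨p, hp⟩, rfl⟩
  exact sub_le_sub (makespan_mono_scenario setup0 setup sc fun i j => (hp i j).2)
    (optMakespan_mono setup0 setup fun i j => (hp i j).1)

theorem maxRegret_le_of_makespan_le [Finite N] (lb ub : M → N → ℝ) {sc sc' : Schedule M N}
    (h : ∀ p, makespan setup0 setup sc p ≤ makespan setup0 setup sc' p) :
    maxRegret setup0 setup lb ub sc ≤ maxRegret setup0 setup lb ub sc' :=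
  ciSup_mono (bddAbove_regret setup0 setup lb ub sc') fun p => sub_le_sub_right (h p.1) _

end Regret

theorem optimal_sequencing_minimizes_maxRegret_general
    [Fintype M] [Nonempty M] [DecidableEq N]
    (setup0 : M → N → ℝ) (setup : M → N → N → ℝ) (lb ub : M → N → ℝ)
    (Y : M → Finset N)
    (scOpt : Schedule M N) (hOpt : ∀ i, (scOpt.seq i).toFinset = Y i)
    (hmin : ∀ sc : Schedule M N, (∀ i, (sc.seq i).toFinset = Y i) →
      ∑ i : M, totalSetup setup0 setup i (scOpt.seq i) ≤
        ∑ i : M, totalSetup setup0 setup i (sc.seq i))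
    (sc : Schedule M N) (hsc : ∀ i, (sc.seq i).toFinset = Y i) :
    maxRegret setup0 setup lb ub scOpt ≤ maxRegret setup0 setup lb ub sc := by
  classical
  have := scOpt.finite_jobs
  have hperm (i : M) : (sc.seq i).Perm (scOpt.seq i) :=
    sc.seq_perm_of_toFinset_eq scOpt i ((hsc i).trans (hOpt i).symm)
  have hsetup (i : M) :
      totalSetup setup0 setup i (scOpt.seq i) ≤ totalSetup setup0 setup i (sc.seq i) :=
    totalSetup_le_of_sum_le_reorder setup0 setup scOpt i _ (hperm i) <|
      hmin _ fun k => (scOpt.toFinset_reorder_seq i _ (hperm i) k).trans (hOpt k)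
  refine maxRegret_le_of_makespan_le setup0 setup lb ub fun p =>
    makespan_le_of_complTime_le setup0 setup fun i => ?_
  exact complTime_le_of_perm setup0 setup scOpt sc p i (hperm i).symm (hsetup i)

/-- Fix a job assignment `Y` (for each machine, the set of jobs it
processes). If a schedule `scOpt` compatible with `Y` minimizes the total setup time
over all schedules compatible with `Y`, then it also minimizes the maximum regret
over all schedules compatible with `Y`. -/
theorem optimal_sequencing_minimizes_maxRegret
    [Fintype M] [Nonempty M] [DecidableEq N]
    (setup0 : M → N → ℝ) (setup : M → N → N → ℝ) (lb ub : M → N → ℝ)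
    (hs0 : ∀ i k, 0 ≤ setup0 i k) (hs : ∀ i j k, 0 ≤ setup i j k)
    (hlb : ∀ i j, 0 ≤ lb i j) (hlu : ∀ i j, lb i j ≤ ub i j)
    (Y : M → Finset N)
    (scOpt : Schedule M N) (hOpt : ∀ i, (scOpt.seq i).toFinset = Y i)
    (hmin : ∀ sc : Schedule M N, (∀ i, (sc.seq i).toFinset = Y i) →
      ∑ i : M, totalSetup setup0 setup i (scOpt.seq i) ≤
        ∑ i : M, totalSetup setup0 setup i (sc.seq i))
    (sc : Schedule M N) (hsc : ∀ i, (sc.seq i).toFinset = Y i) :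
    maxRegret setup0 setup lb ub scOpt ≤ maxRegret setup0 setup lb ub sc :=
  optimal_sequencing_minimizes_maxRegret_general setup0 setup lb ub Y scOpt hOpt hmin sc hsc

end
end

section
/- Let π be a schedule, p⁰ ∈ S a worst-case scenario for π, and i_c a machine that is critical for π under p⁰. If a schedule π' has exactly the same job sequence on machine i_c as π (i.e., π'_{i_c} = π_{i_c}), then R_max(π') ≥ R_max(π). In other words, no modification of the job assignment that leaves the critical machine's jobs and sequence unchanged can strictly decrease the maximum regret. -/
open Finset

noncomputable section

variable {M N : Type*}

lemma totalSetup_nonneg (setup0 : M → N → ℝ) (setup : M → N → N → ℝ)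
    (hs0 : ∀ i k, 0 ≤ setup0 i k) (hs : ∀ i j k, 0 ≤ setup i j k)
    (i : M) (l : List N) : 0 ≤ totalSetup setup0 setup i l := by
  cases l with
  | nil => simp [totalSetup]
  | cons k rest =>
    have key : ∀ (l1 l2 : List N), 0 ≤ (List.zipWith (setup i) l1 l2).sum := by
      intro l1
      induction l1 with
      | nil => intro l2; simp
      | cons a t ih =>
        intro l2
        cases l2 with
        | nil => simp
        | cons b t2 => simpa using add_nonneg (hs i a b) (ih t2)
    simpa [totalSetup] using add_nonneg (hs0 i k) (key (k :: rest) rest)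

lemma complTime_nonneg [Fintype M] [Nonempty M] (setup0 : M → N → ℝ)
    (setup : M → N → N → ℝ) (lb ub : M → N → ℝ)
    (hs0 : ∀ i k, 0 ≤ setup0 i k) (hs : ∀ i j k, 0 ≤ setup i j k)
    (hlb : ∀ i j, 0 ≤ lb i j)
    (sc : Schedule M N) (p : M → N → ℝ) (hp : p ∈ ScenSet lb ub) (i : M) :
    0 ≤ complTime setup0 setup sc p i := by
  apply add_nonneg (totalSetup_nonneg _ _ hs0 hs _ _)
  apply List.sum_nonneg
  intro x hx
  obtain ⟨j, -, rfl⟩ := List.mem_map.1 hx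
  exact le_trans (hlb i j) (hp i j).1

lemma complTime_le_ub [Fintype M] [Nonempty M] (setup0 : M → N → ℝ)
    (setup : M → N → N → ℝ) (lb ub : M → N → ℝ)
    (sc : Schedule M N) (p : M → N → ℝ) (hp : p ∈ ScenSet lb ub) (i : M) :
    complTime setup0 setup sc p i ≤ complTime setup0 setup sc ub i := by
  unfold complTime
  gcongr
  apply List.sum_le_sum
  intro j _
  exact (hp i j).2

lemma optMakespan_nonneg [Fintype M] [Nonempty M] (setup0 : M → N → ℝ)
    (setup : M → N → N → ℝ) (lb ub : M → N → ℝ)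
    (hs0 : ∀ i k, 0 ≤ setup0 i k) (hs : ∀ i j k, 0 ≤ setup i j k)
    (hlb : ∀ i j, 0 ≤ lb i j)
    (p : M → N → ℝ) (hp : p ∈ ScenSet lb ub) :
    0 ≤ optMakespan setup0 setup p := by
  apply Real.iInf_nonneg
  intro sc
  obtain ⟨i⟩ := (inferInstance : Nonempty M)
  exact le_trans (complTime_nonneg setup0 setup lb ub hs0 hs hlb sc p hp i)
    (Finset.le_sup' _ (Finset.mem_univ i))

lemma regret_bddAbove [Fintype M] [Nonempty M] (setup0 : M → N → ℝ)
    (setup : M → N → N → ℝ) (lb ub : M → N → ℝ)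
    (hs0 : ∀ i k, 0 ≤ setup0 i k) (hs : ∀ i j k, 0 ≤ setup i j k)
    (hlb : ∀ i j, 0 ≤ lb i j)
    (sc : Schedule M N) :
    BddAbove (Set.range fun p : ScenSet lb ub => regret setup0 setup sc p.1) := by
  refine ⟨makespan setup0 setup sc ub, ?_⟩
  rintro x ⟨p, rfl⟩
  show regret setup0 setup sc p.1 ≤ makespan setup0 setup sc ub
  unfold regret
  have h1 : makespan setup0 setup sc p.1 ≤ makespan setup0 setup sc ub := by
    apply Finset.sup'_le
    intro i _
    exact le_trans (complTime_le_ub setup0 setup lb ub sc p.1 p.2 i)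
      (Finset.le_sup' _ (Finset.mem_univ i))
  linarith [optMakespan_nonneg setup0 setup lb ub hs0 hs hlb p.1 p.2]

/-- Let `p0 ∈ S` be a worst-case scenario for schedule `sc` and `ic`
a machine critical for `sc` under `p0`. Any schedule `sc'` with the same job
sequence on machine `ic` as `sc` has maximum regret at least that of `sc`:
no modification leaving the critical machine unchanged can strictly decrease the
maximum regret. -/
theorem no_improvement_without_touching_critical_machine [Fintype M] [Nonempty M]
    (setup0 : M → N → ℝ) (setup : M → N → N → ℝ) (lb ub : M → N → ℝ)
    (hs0 : ∀ i k, 0 ≤ setup0 i k) (hs : ∀ i j k, 0 ≤ setup i j k)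
    (hlb : ∀ i j, 0 ≤ lb i j) (hlu : ∀ i j, lb i j ≤ ub i j)
    (sc : Schedule M N) (p0 : M → N → ℝ) (hp0 : p0 ∈ ScenSet lb ub)
    (hworst : regret setup0 setup sc p0 = maxRegret setup0 setup lb ub sc)
    (ic : M) (hcrit : complTime setup0 setup sc p0 ic = makespan setup0 setup sc p0)
    (sc' : Schedule M N) (hsame : sc'.seq ic = sc.seq ic) :
    maxRegret setup0 setup lb ub sc ≤ maxRegret setup0 setup lb ub sc' := by
  rw [← hworst]
  have hcompl : complTime setup0 setup sc' p0 ic = complTime setup0 setup sc p0 ic := by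
    unfold complTime; rw [hsame]
  have hstep : regret setup0 setup sc p0 ≤ regret setup0 setup sc' p0 := by
    unfold regret
    have : makespan setup0 setup sc p0 ≤ makespan setup0 setup sc' p0 := by
      rw [← hcrit, ← hcompl]
      exact Finset.le_sup' _ (Finset.mem_univ ic)
    linarith
  refine le_trans hstep ?_
  exact le_ciSup (regret_bddAbove setup0 setup lb ub hs0 hs hlb sc') ⟨p0, hp0⟩

end
end
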